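/- Under the standing hypotheses, let η̃ ∈ (0,u) and assume 0 < η < e^{σ}/2, 1 + ηe^{−σ} < e^{−σ/2}, m(η,σ) < η̃, and σ + u > 0, where m(η,σ) = max{log(1 + ηe^{−σ}), log(1/(1 − ηe^{−σ})), arcsin(η/(e^{σ}−η))}. Let δ ∈ (0,1) satisfy (1/(u + log 2))·log(1/δ) − 1 > m(η,σ)/(η̃ − m(η,σ)). Let x ∈ ℝ³ with |P_L x| = 1 and 0 < x₃ < δ, let t > 0 satisfy 0 < G₃(s,x) < 1 for s ∈ [0,t) and G₃(t,x) = 1, and let n be the largest integer in [0,t). Then: (a) e^{(σ−η̃)t} ≤ |P_L G(t,x)| ≤ e^{(σ+η̃)t}; (b) e^{(u−η̃)t}·x₃ ≤ 1 ≤ e^{(u+η̃)t}·x₃; (c) (1/(u+η̃))·log(1/x₃) ≤ t ≤ (1/(u−η̃))·log(1/x₃); (d) for every ψ ∈ ℝ and every real φ with ψ − tμ − (n+1)·arcsin(η/(e^{σ}−η)) ≤ φ ≤ ψ − tμ + (n+1)·arcsin(η/(e^{σ}−η)) one has ψ − t(μ+η̃) ≤ φ ≤ ψ − t(μ−η̃).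 -/

import Mathlib

noncomputable section
open Real Set

abbrev R3 := EuclideanSpace ℝ (Fin 3)

/-- Orthogonal projection onto `L = ℝe₁ ⊕ ℝe₂`. -/
def PL (x : R3) : R3 := WithLp.toLp 2 fun i => if (i : ℕ) = 2 then 0 else x i

/-- Orthogonal projection onto `U = ℝe₃`. -/
def PU (x : R3) : R3 := WithLp.toLp 2 fun i => if (i : ℕ) = 2 then x i else 0

/-- The plane `L = ℝe₁ ⊕ ℝe₂`. -/
def Lset : Set R3 := {x | x 2 = 0}

/-- The line `U = ℝe₃`. -/
def Uset : Set R3 := {x | x 0 = 0 ∧ x 1 = 0}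

/-- `B₁ = {x : |P_L x| ≤ 1, |P_U x| ≤ 1}`. -/
def B1 : Set R3 := {x | ‖PL x‖ ≤ 1 ∧ ‖PU x‖ ≤ 1}

/-- The linearized flow `T(t)`. -/
def Tmap (σ μ u t : ℝ) (x : R3) : R3 := WithLp.toLp 2 fun i =>
  if (i : ℕ) = 0 then exp (σ * t) * (cos (μ * t) * x 0 + sin (μ * t) * x 1)
  else if (i : ℕ) = 1 then exp (σ * t) * (-(sin (μ * t)) * x 0 + cos (μ * t) * x 1)
  else exp (u * t) * x 2

/-- A C¹ flow on ℝ³. -/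
def IsC1Flow (G : ℝ → R3 → R3) : Prop :=
  ContDiff ℝ 1 (fun p : ℝ × R3 => G p.1 p.2) ∧ (∀ x, G 0 x = x) ∧
    ∀ s t x, G (t + s) x = G t (G s x)

/-- `M` is invariant under the flow `G` in the set `N`. -/
def InvariantIn (G : ℝ → R3 → R3) (M N : Set R3) : Prop :=
  ∀ x ∈ M ∩ N, ∀ I : Set ℝ, (0 : ℝ) ∈ I → I.OrdConnected →
    (∀ t ∈ I, G t x ∈ N) → ∀ t ∈ I, G t x ∈ M


/-! On `B1` the flow is `η`-close in `C¹` to the linear map `T`, so by the mean value theorem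
on the convex set `B1` and the invariance of `L` and `U`, a step of length `s ≤ 1` multiplies
`‖P_L y‖` by a factor within `η` of `e^{σs}` and `y₃` by one within `η` of `e^{us}`; both
factors are within `e^{±m}` of the linear rates. The orbit stays in `B1` at integer times since
`e^σ + η < 1`, so chaining `n + 1` steps gives (a) and (b) up to the error `(n + 1) m`.
The same chaining with slack `log 2` shows `1 ≤ (2 e^u)^{n+1} x₃`, so `x₃ < δ` forces
`n > m / (η̃ - m)`, i.e. `(n + 1) m ≤ t η̃`, which absorbs the error; (c) and (d) follow. -/

lemma norm_R3 (v : R3) : ‖v‖ = √(v 0 ^ 2 + v 1 ^ 2 + v 2 ^ 2) := by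
  simp [EuclideanSpace.norm_eq, Fin.sum_univ_three, sq_abs]

lemma norm_PL (v : R3) : ‖PL v‖ = √(v 0 ^ 2 + v 1 ^ 2) := by
  simp [norm_R3, PL]

lemma norm_PU (v : R3) : ‖PU v‖ = |v 2| := by
  simp [norm_R3, PU, Real.sqrt_sq_eq_abs]

lemma norm_PL_le (v : R3) : ‖PL v‖ ≤ ‖v‖ := by
  rw [norm_PL, norm_R3]
  exact Real.sqrt_le_sqrt (by nlinarith [sq_nonneg (v 2)])

lemma abs_apply_two_le_norm (v : R3) : |v 2| ≤ ‖v‖ := PiLp.norm_apply_le v 2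

lemma PL_PL (v : R3) : PL (PL v) = PL v := by
  ext i; fin_cases i <;> simp [PL]

lemma PU_PU (v : R3) : PU (PU v) = PU v := by
  ext i; fin_cases i <;> simp [PU]

lemma PU_PL (v : R3) : PU (PL v) = 0 := by
  ext i; fin_cases i <;> simp [PL, PU]

lemma PL_PU (v : R3) : PL (PU v) = 0 := by
  ext i; fin_cases i <;> simp [PL, PU]

lemma PL_add_PU (v : R3) : PL v + PU v = v := by
  ext i; fin_cases i <;> simp [PL, PU]

lemma PL_eq_zero_of_mem_Uset {v : R3} (hv : v ∈ Uset) : PL v = 0 := by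
  ext i; fin_cases i <;> simp [PL, hv.1, hv.2]

lemma PU_apply_two (v : R3) : PU v 2 = v 2 := rfl

def PLₗ : R3 →ₗ[ℝ] R3 where
  toFun := PL
  map_add' x y := by ext i; fin_cases i <;> simp [PL]
  map_smul' c x := by ext i; fin_cases i <;> simp [PL]

def PUₗ : R3 →ₗ[ℝ] R3 where
  toFun := PU
  map_add' x y := by ext i; fin_cases i <;> simp [PU]
  map_smul' c x := by ext i; fin_cases i <;> simp [PU]

lemma PL_sub (x y : R3) : PL (x - y) = PL x - PL y := map_sub PLₗ x y

lemma B1_eq_inter_preimage :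
    B1 = PLₗ ⁻¹' Metric.closedBall 0 1 ∩ PUₗ ⁻¹' Metric.closedBall 0 1 := by
  ext v
  simp [B1, PLₗ, PUₗ]

lemma convex_B1 : Convex ℝ B1 := by
  rw [B1_eq_inter_preimage]
  exact ((convex_closedBall 0 1).linear_preimage PLₗ).inter
    ((convex_closedBall 0 1).linear_preimage PUₗ)

lemma mem_B1_iff {v : R3} : v ∈ B1 ↔ ‖PL v‖ ≤ 1 ∧ |v 2| ≤ 1 := by
  rw [← norm_PU]; rfl

def Tₗ (σ μ u t : ℝ) : R3 →L[ℝ] R3 :=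
  LinearMap.toContinuousLinearMap
  { toFun := Tmap σ μ u t
    map_add' x y := by ext i; fin_cases i <;> simp [Tmap] <;> ring
    map_smul' c x := by ext i; fin_cases i <;> simp [Tmap] <;> ring }

lemma Tₗ_apply (σ μ u t : ℝ) (x : R3) : Tₗ σ μ u t x = Tmap σ μ u t x := rfl

lemma Tmap_apply_zero (σ μ u t : ℝ) (x : R3) :
    Tmap σ μ u t x 0 = exp (σ * t) * (cos (μ * t) * x 0 + sin (μ * t) * x 1) := rfl

lemma Tmap_apply_one (σ μ u t : ℝ) (x : R3) :
    Tmap σ μ u t x 1 = exp (σ * t) * (-sin (μ * t) * x 0 + cos (μ * t) * x 1) := rfl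

lemma Tmap_apply_two (σ μ u t : ℝ) (x : R3) : Tmap σ μ u t x 2 = exp (u * t) * x 2 := rfl

lemma norm_PL_Tmap (σ μ u t : ℝ) (x : R3) :
    ‖PL (Tmap σ μ u t x)‖ = exp (σ * t) * ‖PL x‖ := by
  have hrot : (cos (μ * t) * x 0 + sin (μ * t) * x 1) ^ 2
      + (-sin (μ * t) * x 0 + cos (μ * t) * x 1) ^ 2 = x 0 ^ 2 + x 1 ^ 2 := by
    linear_combination (x 0 ^ 2 + x 1 ^ 2) * sin_sq_add_cos_sq (μ * t)
  rw [norm_PL, norm_PL, Tmap_apply_zero, Tmap_apply_one, mul_pow, mul_pow, ← mul_add, hrot,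
    Real.sqrt_mul (sq_nonneg _), Real.sqrt_sq (exp_pos _).le]

lemma exp_sub_le_sub_and_add_le_exp {σ η a c : ℝ} (hη : 0 ≤ η) (ha : σ ≤ a)
    (hz : η * exp (-σ) < 1) (hc₁ : log (1 + η * exp (-σ)) ≤ c)
    (hc₂ : log (1 / (1 - η * exp (-σ))) ≤ c) :
    exp (a - c) ≤ exp a - η ∧ exp a + η ≤ exp (a + c) := by
  set z := η * exp (-σ)
  have hz0 : 0 ≤ z := by positivity
  have hη_le : η ≤ exp a * z :=
    calc η = exp σ * z := by rw [mul_left_comm, ← exp_add, add_neg_cancel, exp_zero, mul_one]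
      _ ≤ exp a * z := by gcongr
  have h₁ : 1 + z ≤ exp c := (log_le_iff_le_exp (by positivity)).1 hc₁
  have h₂ : exp (-c) ≤ 1 - z := by
    have h := (log_le_iff_le_exp (by bound)).1 hc₂
    calc exp (-c) = (exp c)⁻¹ := exp_neg c
      _ ≤ (1 / (1 - z))⁻¹ := inv_anti₀ (by bound) h
      _ = 1 - z := by rw [one_div, inv_inv]
  constructor
  · calc exp (a - c) = exp a * exp (-c) := by rw [sub_eq_add_neg, exp_add]
      _ ≤ exp a * (1 - z) := by gcongr
      _ ≤ exp a - η := by linarith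
  · calc exp a + η ≤ exp a * (1 + z) := by linarith
      _ ≤ exp a * exp c := by gcongr
      _ = exp (a + c) := (exp_add a c).symm

lemma exp_sub_mul_le_and_le_exp_add_mul {a c η r r' : ℝ} (hr : 0 ≤ r)
    (h : |r' - exp a * r| ≤ η * r) (hlo : exp (a - c) ≤ exp a - η)
    (hhi : exp a + η ≤ exp (a + c)) :
    exp (a - c) * r ≤ r' ∧ r' ≤ exp (a + c) * r := by
  obtain ⟨h₁, h₂⟩ := abs_le.1 h
  constructor
  · nlinarith [mul_le_mul_of_nonneg_right hlo hr]
  · nlinarith [mul_le_mul_of_nonneg_right hhi hr]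

lemma exp_bounds_of_unit_steps {f : ℝ → ℝ} {a c : ℝ} {n : ℕ}
    (hstep : ∀ k : ℕ, k ≤ n → ∀ s ∈ Icc (0 : ℝ) 1,
      exp (a * s - c) * f k ≤ f (k + s) ∧ f (k + s) ≤ exp (a * s + c) * f k)
    {t : ℝ} (ht : t ∈ Icc (n : ℝ) (n + 1)) :
    exp (a * t - (n + 1) * c) * f 0 ≤ f t ∧ f t ≤ exp (a * t + (n + 1) * c) * f 0 := by
  induction n generalizing t with
  | zero =>
    simpa using hstep 0 le_rfl t (by simpa using ht)
  | succ n ih =>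
    obtain ⟨hlo, hhi⟩ := ih (fun k hk => hstep k (hk.trans n.le_succ)) (t := n + 1)
      ⟨by linarith, le_rfl⟩
    have hs : t - (n + 1 : ℕ) ∈ Icc (0 : ℝ) 1 := ⟨by push_cast at ht ⊢; linarith [ht.1],
      by push_cast at ht ⊢; linarith [ht.2]⟩
    obtain ⟨hlo', hhi'⟩ := hstep (n + 1) le_rfl _ hs
    rw [add_sub_cancel, Nat.cast_succ] at hlo' hhi'
    push_cast
    constructor
    · calc exp (a * t - (n + 1 + 1) * c) * f 0
          = exp (a * (t - (n + 1)) - c) * (exp (a * (n + 1) - (n + 1) * c) * f 0) := by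
            rw [← mul_assoc, ← exp_add]; ring_nf
        _ ≤ exp (a * (t - (n + 1)) - c) * f (n + 1) := by gcongr
        _ ≤ f t := hlo'
    · calc f t ≤ exp (a * (t - (n + 1)) + c) * f (n + 1) := hhi'
        _ ≤ exp (a * (t - (n + 1)) + c) * (exp (a * (n + 1) + (n + 1) * c) * f 0) := by gcongr
        _ = exp (a * t + (n + 1 + 1) * c) * f 0 := by rw [← mul_assoc, ← exp_add]; ring_nf

lemma exp_add_le_one {σ η : ℝ} (hσ : σ ≤ 0) (h : 1 + η * exp (-σ) < exp (-σ / 2)) :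
    exp σ + η ≤ 1 :=
  calc exp σ + η = exp σ * (1 + η * exp (-σ)) := by
        rw [mul_add, mul_one, mul_left_comm, ← exp_add, add_neg_cancel, exp_zero, mul_one]
    _ ≤ exp σ * exp (-σ / 2) := by gcongr
    _ = exp (σ / 2) := by rw [← exp_add]; ring_nf
    _ ≤ 1 := exp_le_one_iff.2 (by linarith)

lemma succ_mul_le_mul_of_log_one_div_lt {m e t A δ N : ℝ} (hme : m < e) (he : 0 < e)
    (hA : 0 < A) (hNt : N ≤ t) (hδ : 1 / A * log (1 / δ) - 1 > m / (e - m))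
    (hlog : log (1 / δ) < (N + 1) * A) : (N + 1) * m ≤ t * e := by
  have h : log (1 / δ) / A < N + 1 := (div_lt_iff₀ hA).2 hlog
  rw [one_div_mul_eq_div] at hδ
  have hN : m / (e - m) < N := by linarith
  rw [div_lt_iff₀ (sub_pos.2 hme)] at hN
  nlinarith [mul_le_mul_of_nonneg_right hNt he.le]

lemma log_one_div_lt_of_one_le_exp_mul {b x δ : ℝ} (hx : 0 < x) (hxδ : x < δ)
    (h : 1 ≤ exp b * x) : log (1 / δ) < b := by
  rw [log_lt_iff_lt_exp (by bound)]
  calc 1 / δ < 1 / x := one_div_lt_one_div_of_lt hx hxδ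
    _ ≤ exp b := (div_le_iff₀ hx).2 h

lemma one_le_exp_mul_mul_iff {a t x : ℝ} (ha : 0 < a) (hx : 0 < x) :
    1 ≤ exp (a * t) * x ↔ 1 / a * log (1 / x) ≤ t := by
  rw [← div_le_iff₀ hx, ← log_le_iff_le_exp (by positivity), one_div_mul_eq_div,
    div_le_iff₀ ha, mul_comm]

lemma exp_mul_mul_le_one_iff {a t x : ℝ} (ha : 0 < a) (hx : 0 < x) :
    exp (a * t) * x ≤ 1 ↔ t ≤ 1 / a * log (1 / x) := by
  rw [← le_div_iff₀ hx, ← le_log_iff_exp_le (by positivity), one_div_mul_eq_div,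
    le_div_iff₀ ha, mul_comm]

structure NearLinearFlow (σ μ u η rB : ℝ) (G : ℝ → R3 → R3) : Prop where
  isC1Flow : IsC1Flow G
  fderiv_sub_Tmap_le : ∀ t ∈ Icc (0 : ℝ) 1, ∀ x ∈ B1, ∀ y : R3,
    ‖fderiv ℝ (G t) x y - Tmap σ μ u t y‖ ≤ η * ‖y‖
  B1_subset : B1 ⊆ Metric.closedBall 0 rB
  mapsTo_closedBall : ∀ t ∈ Icc (0 : ℝ) 1, ∀ x ∈ B1, G t x ∈ Metric.closedBall 0 rB
  invariantIn_Lset : InvariantIn G Lset (Metric.closedBall 0 rB)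
  invariantIn_Uset : InvariantIn G Uset (Metric.closedBall 0 rB)

namespace NearLinearFlow

variable {σ μ u η rB : ℝ} {G : ℝ → R3 → R3}

lemma differentiable (hG : NearLinearFlow σ μ u η rB G) (s : ℝ) : Differentiable ℝ (G s) :=
  (hG.isC1Flow.1.comp (contDiff_const.prodMk contDiff_id)).differentiable one_ne_zero

lemma apply_mem_of_invariantIn (hG : NearLinearFlow σ μ u η rB G) {M : Set R3}
    (hM : InvariantIn G M (Metric.closedBall 0 rB)) {s : ℝ} (hs : s ∈ Icc (0 : ℝ) 1)
    {y : R3} (hy : y ∈ B1) (hyM : y ∈ M) : G s y ∈ M :=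
  hM y ⟨hyM, hG.B1_subset hy⟩ (Icc 0 s) ⟨le_rfl, hs.1⟩ ordConnected_Icc
    (fun r hr => hG.mapsTo_closedBall r ⟨hr.1, hr.2.trans hs.2⟩ y hy) s ⟨hs.1, le_rfl⟩

lemma norm_sub_sub_Tmap_le (hG : NearLinearFlow σ μ u η rB G) (hη : 0 ≤ η) {s : ℝ}
    (hs : s ∈ Icc (0 : ℝ) 1) {y z : R3} (hy : y ∈ B1) (hz : z ∈ B1) :
    ‖G s y - G s z - Tmap σ μ u s (y - z)‖ ≤ η * ‖y - z‖ := by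
  rw [← Tₗ_apply]
  refine convex_B1.norm_image_sub_le_of_norm_fderiv_le' (fun w _ => hG.differentiable s w)
    (fun w hw => ?_) hz hy
  exact ContinuousLinearMap.opNorm_le_bound _ hη fun v => hG.fderiv_sub_Tmap_le s hs w hw v

lemma abs_apply_two_sub_le (hG : NearLinearFlow σ μ u η rB G) (hη : 0 ≤ η) {s : ℝ}
    (hs : s ∈ Icc (0 : ℝ) 1) {y : R3} (hy : y ∈ B1) :
    |G s y 2 - exp (u * s) * y 2| ≤ η * |y 2| := by
  have hPLy : PL y ∈ B1 := ⟨by rw [PL_PL]; exact hy.1, by simp [PU_PL]⟩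
  have hL : G s (PL y) 2 = 0 :=
    hG.apply_mem_of_invariantIn hG.invariantIn_Lset hs hPLy rfl
  have h := hG.norm_sub_sub_Tmap_le hη hs hy hPLy
  rw [sub_eq_iff_eq_add'.mpr (PL_add_PU y).symm, norm_PU] at h
  refine le_trans (le_of_eq ?_) ((abs_apply_two_le_norm _).trans h)
  simp [hL, Tmap_apply_two, PU_apply_two]

lemma abs_norm_PL_sub_le (hG : NearLinearFlow σ μ u η rB G) (hη : 0 ≤ η) {s : ℝ}
    (hs : s ∈ Icc (0 : ℝ) 1) {y : R3} (hy : y ∈ B1) :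
    |‖PL (G s y)‖ - exp (σ * s) * ‖PL y‖| ≤ η * ‖PL y‖ := by
  have hPUy : PU y ∈ B1 := ⟨by simp [PL_PU], by rw [PU_PU]; exact hy.2⟩
  have hU : PL (G s (PU y)) = 0 := PL_eq_zero_of_mem_Uset <|
    hG.apply_mem_of_invariantIn hG.invariantIn_Uset hs hPUy ⟨rfl, rfl⟩
  have h := hG.norm_sub_sub_Tmap_le hη hs hy hPUy
  rw [sub_eq_iff_eq_add.mpr (PL_add_PU y).symm] at h
  calc |‖PL (G s y)‖ - exp (σ * s) * ‖PL y‖|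
      = |‖PL (G s y)‖ - ‖PL (Tmap σ μ u s (PL y))‖| := by rw [norm_PL_Tmap, PL_PL]
    _ ≤ ‖PL (G s y - G s (PU y) - Tmap σ μ u s (PL y))‖ := by
      rw [PL_sub, PL_sub, hU, sub_zero]
      exact abs_norm_sub_norm_le _ _
    _ ≤ η * ‖PL y‖ := (norm_PL_le _).trans h

lemma step_bounds (hG : NearLinearFlow σ μ u η rB G) (hη : 0 ≤ η) (hσ : σ ≤ 0) (hu : 0 ≤ u)
    (hz : η * exp (-σ) < 1) {c : ℝ} (hc₁ : log (1 + η * exp (-σ)) ≤ c)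
    (hc₂ : log (1 / (1 - η * exp (-σ))) ≤ c) {s : ℝ} (hs : s ∈ Icc (0 : ℝ) 1) {y : R3}
    (hy : y ∈ B1) (hy₂ : 0 ≤ y 2) :
    (exp (σ * s - c) * ‖PL y‖ ≤ ‖PL (G s y)‖ ∧ ‖PL (G s y)‖ ≤ exp (σ * s + c) * ‖PL y‖) ∧
      (exp (u * s - c) * y 2 ≤ G s y 2 ∧ G s y 2 ≤ exp (u * s + c) * y 2) := by
  have hσs : σ ≤ σ * s := by nlinarith [hs.2]
  have hus : σ ≤ u * s := by nlinarith [hs.1]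
  obtain ⟨hσlo, hσhi⟩ := exp_sub_le_sub_and_add_le_exp hη hσs hz hc₁ hc₂
  obtain ⟨hulo, huhi⟩ := exp_sub_le_sub_and_add_le_exp hη hus hz hc₁ hc₂
  have hU := hG.abs_apply_two_sub_le hη hs hy
  rw [abs_of_nonneg hy₂] at hU
  exact ⟨exp_sub_mul_le_and_le_exp_add_mul (norm_nonneg _) (hG.abs_norm_PL_sub_le hη hs hy)
      hσlo hσhi, exp_sub_mul_le_and_le_exp_add_mul hy₂ hU hulo huhi⟩

lemma orbit_mem_B1 (hG : NearLinearFlow σ μ u η rB G) (hη : 0 ≤ η) (hcontr : exp σ + η ≤ 1)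
    {x : R3} (hx : ‖PL x‖ ≤ 1) {t : ℝ}
    (htravel : ∀ s ∈ Ico (0 : ℝ) t, 0 < G s x 2 ∧ G s x 2 < 1) :
    ∀ k : ℕ, (k : ℝ) < t → G k x ∈ B1 := by
  have hU : ∀ k : ℕ, (k : ℝ) < t → |G k x 2| ≤ 1 := fun k hk => by
    obtain ⟨h₀, h₁⟩ := htravel k ⟨k.cast_nonneg, hk⟩
    exact abs_le.2 ⟨by linarith, h₁.le⟩
  intro k
  induction k with
  | zero => intro hk; exact mem_B1_iff.2 ⟨by simpa [hG.isC1Flow.2.1] using hx, hU 0 hk⟩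
  | succ k ih =>
    intro hk
    have hk' : (k : ℝ) < t := by push_cast at hk; linarith
    have hstep := (abs_le.1 (hG.abs_norm_PL_sub_le hη ⟨zero_le_one, le_rfl⟩ (ih hk'))).2
    rw [mul_one] at hstep
    refine mem_B1_iff.2 ⟨?_, hU _ hk⟩
    rw [Nat.cast_succ, add_comm, hG.isC1Flow.2.2]
    calc ‖PL (G 1 (G k x))‖ ≤ (exp σ + η) * ‖PL (G k x)‖ := by linarith
      _ ≤ 1 := mul_le_one₀ hcontr (norm_nonneg _) (ih hk').1

lemma orbit_bounds (hG : NearLinearFlow σ μ u η rB G) (hη : 0 ≤ η) (hσ : σ ≤ 0) (hu : 0 ≤ u)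
    (hcontr : exp σ + η ≤ 1) (hz : η * exp (-σ) < 1) {c : ℝ}
    (hc₁ : log (1 + η * exp (-σ)) ≤ c) (hc₂ : log (1 / (1 - η * exp (-σ))) ≤ c)
    {x : R3} (hx : ‖PL x‖ ≤ 1) {t : ℝ}
    (htravel : ∀ s ∈ Ico (0 : ℝ) t, 0 < G s x 2 ∧ G s x 2 < 1)
    {n : ℕ} (hn₁ : (n : ℝ) < t) (hn₂ : t ≤ n + 1) :
    (exp (σ * t - (n + 1) * c) * ‖PL x‖ ≤ ‖PL (G t x)‖ ∧
        ‖PL (G t x)‖ ≤ exp (σ * t + (n + 1) * c) * ‖PL x‖) ∧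
      (exp (u * t - (n + 1) * c) * x 2 ≤ G t x 2 ∧
        G t x 2 ≤ exp (u * t + (n + 1) * c) * x 2) := by
  have hstep : ∀ k : ℕ, k ≤ n → ∀ s ∈ Icc (0 : ℝ) 1,
      (exp (σ * s - c) * ‖PL (G k x)‖ ≤ ‖PL (G (k + s) x)‖ ∧
        ‖PL (G (k + s) x)‖ ≤ exp (σ * s + c) * ‖PL (G k x)‖) ∧
      (exp (u * s - c) * G k x 2 ≤ G (k + s) x 2 ∧
        G (k + s) x 2 ≤ exp (u * s + c) * G k x 2) := by
    intro k hk s hs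
    have hkt : (k : ℝ) < t := (Nat.cast_le.2 hk).trans_lt hn₁
    rw [add_comm, hG.isC1Flow.2.2]
    exact hG.step_bounds hη hσ hu hz hc₁ hc₂ hs (hG.orbit_mem_B1 hη hcontr hx htravel k hkt)
      (htravel k ⟨k.cast_nonneg, hkt⟩).1.le
  have hPL := exp_bounds_of_unit_steps (f := fun s => ‖PL (G s x)‖)
    (fun k hk s hs => (hstep k hk s hs).1) ⟨hn₁.le, hn₂⟩
  have hU := exp_bounds_of_unit_steps (f := fun s => G s x 2)
    (fun k hk s hs => (hstep k hk s hs).2) ⟨hn₁.le, hn₂⟩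
  simp only [hG.isC1Flow.2.1] at hPL hU
  exact ⟨hPL, hU⟩

end NearLinearFlow

theorem statement13_general
    (u σ μ η rB : ℝ) (hu : 0 < u) (hσ : σ < 0) (hη : 0 < η)
    (hB1B : B1 ⊆ Metric.closedBall (0 : R3) rB)
    (G : ℝ → R3 → R3) (hG : IsC1Flow G)
    (hD2 : ∀ t ∈ Icc (0:ℝ) 1, ∀ x ∈ B1, ∀ y : R3,
      ‖fderiv ℝ (G t) x y - Tmap σ μ u t y‖ ≤ η * ‖y‖)
    (hGB : ∀ t ∈ Icc (0:ℝ) 1, ∀ x ∈ B1, G t x ∈ Metric.closedBall (0 : R3) rB)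
    (hLinv : InvariantIn G Lset (Metric.closedBall 0 rB))
    (hUinv : InvariantIn G Uset (Metric.closedBall 0 rB))
    (ηt : ℝ) (hηt : 0 < ηt) (hηtu : ηt < u)
    (hησ2 : η < exp σ / 2) (hησ3 : 1 + η * exp (-σ) < exp (-σ / 2))
    (hm : max (max (Real.log (1 + η * exp (-σ))) (Real.log (1 / (1 - η * exp (-σ)))))
        (arcsin (η / (exp σ - η))) < ηt)
    (δ : ℝ)
    (hδsmall : 1 / (u + Real.log 2) * Real.log (1 / δ) - 1 >
      max (max (Real.log (1 + η * exp (-σ))) (Real.log (1 / (1 - η * exp (-σ)))))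
          (arcsin (η / (exp σ - η))) /
        (ηt - max (max (Real.log (1 + η * exp (-σ)))
          (Real.log (1 / (1 - η * exp (-σ))))) (arcsin (η / (exp σ - η)))))
    (x : R3) (hxcyl : ‖PL x‖ = 1) (hx3pos : 0 < x 2) (hx3lt : x 2 < δ)
    (t : ℝ)
    (htravel : ∀ s ∈ Ico (0 : ℝ) t, 0 < G s x 2 ∧ G s x 2 < 1)
    (hhit : G t x 2 = 1)
    (n : ℕ) (hn1 : (n : ℝ) < t) (hn2 : t ≤ (n : ℝ) + 1) :
    (exp ((σ - ηt) * t) ≤ ‖PL (G t x)‖ ∧ ‖PL (G t x)‖ ≤ exp ((σ + ηt) * t)) ∧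
    (exp ((u - ηt) * t) * x 2 ≤ 1 ∧ 1 ≤ exp ((u + ηt) * t) * x 2) ∧
    (1 / (u + ηt) * Real.log (1 / x 2) ≤ t ∧ t ≤ 1 / (u - ηt) * Real.log (1 / x 2)) ∧
    (∀ ψ φ : ℝ,
      ψ - t * μ - ((n : ℝ) + 1) * arcsin (η / (exp σ - η)) ≤ φ →
      φ ≤ ψ - t * μ + ((n : ℝ) + 1) * arcsin (η / (exp σ - η)) →
      ψ - t * (μ + ηt) ≤ φ ∧ φ ≤ ψ - t * (μ - ηt)) := by
  set m := max (max (log (1 + η * exp (-σ))) (log (1 / (1 - η * exp (-σ)))))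
    (arcsin (η / (exp σ - η)))
  have hz : η * exp (-σ) < 1 / 2 :=
    calc η * exp (-σ) < exp σ / 2 * exp (-σ) := by gcongr
      _ = 1 / 2 := by rw [div_mul_eq_mul_div, ← exp_add, add_neg_cancel, exp_zero]
  have hflow : NearLinearFlow σ μ u η rB G := ⟨hG, hD2, hB1B, hGB, hLinv, hUinv⟩
  have horbit := fun c (hc₁ : log (1 + η * exp (-σ)) ≤ c)
      (hc₂ : log (1 / (1 - η * exp (-σ))) ≤ c) =>
    hflow.orbit_bounds hη.le hσ.le hu.le (exp_add_le_one hσ.le hησ3) (hz.trans one_half_lt_one)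
      hc₁ hc₂ hxcyl.le htravel hn1 hn2
  obtain ⟨⟨hPL₁, hPL₂⟩, hU₁, hU₂⟩ := horbit m ((le_max_left _ _).trans (le_max_left _ _))
    ((le_max_right _ _).trans (le_max_left _ _))
  obtain ⟨-, -, hcrude⟩ := horbit (log 2) (log_le_log (by positivity) (by linarith))
    (log_le_log (by bound) (by rw [div_le_iff₀ (by linarith)]; linarith))
  simp only [hxcyl, mul_one] at hPL₁ hPL₂
  rw [hhit] at hU₁ hU₂ hcrude
  have hlogδ : log (1 / δ) < (n + 1) * (u + log 2) :=
    log_one_div_lt_of_one_le_exp_mul hx3pos hx3lt <| hcrude.trans <| by gcongr; nlinarith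
  have hK : (n + 1) * m ≤ t * ηt :=
    succ_mul_le_mul_of_log_one_div_lt hm hηt (by positivity) hn1.le hδsmall hlogδ
  have hb₁ : exp ((u - ηt) * t) * x 2 ≤ 1 := le_trans (by gcongr; linarith) hU₁
  have hb₂ : 1 ≤ exp ((u + ηt) * t) * x 2 := hU₂.trans (by gcongr; linarith)
  refine ⟨⟨le_trans (by gcongr; linarith) hPL₁, hPL₂.trans (by gcongr; linarith)⟩, ⟨hb₁, hb₂⟩,
    ⟨(one_le_exp_mul_mul_iff (by linarith) hx3pos).1 hb₂,
      (exp_mul_mul_le_one_iff (by linarith) hx3pos).1 hb₁⟩, fun ψ φ h₁ h₂ => ?_⟩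
  have harcsin : (n + 1) * arcsin (η / (exp σ - η)) ≤ t * ηt :=
    (mul_le_mul_of_nonneg_left (le_max_right _ _) (by positivity)).trans hK
  constructor <;> linarith

theorem statement13
    (u σ μ η rB : ℝ) (hu : 0 < u) (hσ : σ < 0) (hμ : 0 < μ) (hη : 0 < η)
    (hB1B : B1 ⊆ Metric.closedBall (0 : R3) rB)
    (G : ℝ → R3 → R3) (hG : IsC1Flow G) (hG0 : ∀ t : ℝ, G t 0 = 0)
    (hD2 : ∀ t ∈ Icc (0:ℝ) 1, ∀ x ∈ B1, ∀ y : R3,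
      ‖fderiv ℝ (G t) x y - Tmap σ μ u t y‖ ≤ η * ‖y‖)
    (hGB : ∀ t ∈ Icc (0:ℝ) 1, ∀ x ∈ B1, G t x ∈ Metric.closedBall (0 : R3) rB)
    (hLinv : InvariantIn G Lset (Metric.closedBall 0 rB))
    (hUinv : InvariantIn G Uset (Metric.closedBall 0 rB))
    (ηt : ℝ) (hηt : 0 < ηt) (hηtu : ηt < u)
    (hησ2 : η < exp σ / 2) (hησ3 : 1 + η * exp (-σ) < exp (-σ / 2))
    (hm : max (max (Real.log (1 + η * exp (-σ))) (Real.log (1 / (1 - η * exp (-σ)))))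
        (arcsin (η / (exp σ - η))) < ηt)
    (hσu : 0 < σ + u)
    (δ : ℝ) (hδ : δ ∈ Ioo (0 : ℝ) 1)
    (hδsmall : 1 / (u + Real.log 2) * Real.log (1 / δ) - 1 >
      max (max (Real.log (1 + η * exp (-σ))) (Real.log (1 / (1 - η * exp (-σ)))))
          (arcsin (η / (exp σ - η))) /
        (ηt - max (max (Real.log (1 + η * exp (-σ)))
          (Real.log (1 / (1 - η * exp (-σ))))) (arcsin (η / (exp σ - η)))))
    (x : R3) (hxcyl : ‖PL x‖ = 1) (hx3pos : 0 < x 2) (hx3lt : x 2 < δ)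
    (t : ℝ) (ht : 0 < t)
    (htravel : ∀ s ∈ Ico (0 : ℝ) t, 0 < G s x 2 ∧ G s x 2 < 1)
    (hhit : G t x 2 = 1)
    (n : ℕ) (hn1 : (n : ℝ) < t) (hn2 : t ≤ (n : ℝ) + 1) :
    (exp ((σ - ηt) * t) ≤ ‖PL (G t x)‖ ∧ ‖PL (G t x)‖ ≤ exp ((σ + ηt) * t)) ∧
    (exp ((u - ηt) * t) * x 2 ≤ 1 ∧ 1 ≤ exp ((u + ηt) * t) * x 2) ∧
    (1 / (u + ηt) * Real.log (1 / x 2) ≤ t ∧ t ≤ 1 / (u - ηt) * Real.log (1 / x 2)) ∧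
    (∀ ψ φ : ℝ,
      ψ - t * μ - ((n : ℝ) + 1) * arcsin (η / (exp σ - η)) ≤ φ →
      φ ≤ ψ - t * μ + ((n : ℝ) + 1) * arcsin (η / (exp σ - η)) →
      ψ - t * (μ + ηt) ≤ φ ∧ φ ≤ ψ - t * (μ - ηt)) :=
  statement13_general u σ μ η rB hu hσ hη hB1B G hG hD2 hGB hLinv hUinv ηt hηt hηtu hησ2 hησ3 hm δ
    hδsmall x hxcyl hx3pos hx3lt t htravel hhit n hn1 hn2
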